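/- arXiv:1902.00197 — 6 statements merged into one kernel-verified Lean document; each statement's English description precedes it below -/
import Mathlib

section
/- Let X₁, …, Xₙ be sampled uniformly without replacement from a finite population {x₁, …, x_N} ⊆ {0,1} with n ≤ N, let μ = (1/N)·∑ᵢ xᵢ, and let S_k = ∑_{i=1}^k X_i. Then for any θ > 0, the probability that max_{1 ≤ k ≤ n} |S_k − μ·k| ≥ sqrt(n·θ) is at most 1/θ. -/
/-!
Identify the sample with a uniformly random permutation `σ` and put `D_k = S_k - μ k`.
Exchangeability of the draws makes `D_k / k` a reverse martingale for the σ-algebras generated by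
the draws from position `k` on: `E[(D_m / m - D_k / k) g] = 0` whenever `m ≤ k` and `g` depends
only on those draws. Splitting the event according to the last `k ≤ n` with `|D_k| ≥ t` and
summing by parts with `k² = ∑_{m ≤ k} (2m - 1)` gives the Hájek–Rényi bound
`t² P(max_{k ≤ n} |D_k| ≥ t) ≤ ∑_{m ≤ n} (2m - 1) E[D_m²] / m²`. The draws are negatively
correlated, so `E[D_m²] ≤ m Var(x) ≤ m / 4`, the right-hand side is at most `n / 2`, and
`t² = nθ` finishes.
-/

open Finset
open scoped Nat

theorem PMF.toMeasure_uniformOfFintype_top_apply_finset {α : Type*} [Fintype α] [Nonempty α]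
    (s : Finset α) :
    @PMF.toMeasure _ ⊤ (PMF.uniformOfFintype α) s = #s / Fintype.card α := by
  rw [@PMF.toMeasure_uniformOfFintype_apply _ _ _ _ ⊤ MeasurableSpace.measurableSet_top _]
  simp only [Finset.coe_sort_coe, Fintype.card_coe]

namespace SamplingWithoutReplacement

variable {N : ℕ}

noncomputable def mean (x : Fin N → ℝ) : ℝ := (∑ i, x i) / N

noncomputable def partialSum (x : Fin N → ℝ) (k : ℕ) (σ : Equiv.Perm (Fin N)) : ℝ :=
  ∑ i : Fin N, if (i : ℕ) < k then x (σ i) else 0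

noncomputable def deviation (x : Fin N → ℝ) (k : ℕ) (σ : Equiv.Perm (Fin N)) : ℝ :=
  partialSum x k σ - mean x * k

def DependsOnTail {β : Type*} (k : ℕ) (g : Equiv.Perm (Fin N) → β) : Prop :=
  ∀ σ τ : Equiv.Perm (Fin N), (∀ m : Fin N, k ≤ (m : ℕ) → σ m = τ m) → g σ = g τ

theorem DependsOnTail.apply_mul_swap {β : Type*} {k : ℕ} {g : Equiv.Perm (Fin N) → β}
    (hg : DependsOnTail k g) {i j : Fin N} (hi : (i : ℕ) < k) (hj : (j : ℕ) < k)
    (σ : Equiv.Perm (Fin N)) : g (σ * Equiv.swap i j) = g σ :=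
  hg _ _ fun m hm => by
    rw [Equiv.Perm.mul_apply, Equiv.swap_apply_of_ne_of_ne (Fin.ne_of_val_ne (by omega))
      (Fin.ne_of_val_ne (by omega))]

theorem sum_apply_mul_eq_of_mul_swap (f : Fin N → ℝ) {g : Equiv.Perm (Fin N) → ℝ} {i j : Fin N}
    (hg : ∀ σ, g (σ * Equiv.swap i j) = g σ) :
    ∑ σ, f (σ i) * g σ = ∑ σ, f (σ j) * g σ := by
  rw [← Equiv.sum_comp (Equiv.mulRight (Equiv.swap i j)) (fun σ => f (σ j) * g σ)]
  simp [hg]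

theorem card_filter_val_lt_of_le {k : ℕ} (hk : k ≤ N) : #{i : Fin N | (i : ℕ) < k} = k := by
  rw [Fin.card_filter_val_lt, min_eq_right hk]

theorem partialSum_eq_sum_filter (x : Fin N → ℝ) (k : ℕ) (σ : Equiv.Perm (Fin N)) :
    partialSum x k σ = ∑ i ∈ {i : Fin N | (i : ℕ) < k}, x (σ i) :=
  (sum_filter _ _).symm

theorem deviation_eq_sum_filter (x : Fin N → ℝ) {k : ℕ} (hk : k ≤ N) (σ : Equiv.Perm (Fin N)) :
    deviation x k σ = ∑ i ∈ {i : Fin N | (i : ℕ) < k}, (x (σ i) - mean x) := by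
  rw [deviation, partialSum_eq_sum_filter, sum_sub_distrib, sum_const,
    card_filter_val_lt_of_le hk, nsmul_eq_mul, mul_comm]

theorem dependsOnTail_partialSum (x : Fin N → ℝ) {k j : ℕ} (hkj : k ≤ j) :
    DependsOnTail k (partialSum x j) := by
  have hcompl : ∀ σ : Equiv.Perm (Fin N), partialSum x j σ
      = ∑ a, x a - ∑ i ∈ {i : Fin N | ¬ (i : ℕ) < j}, x (σ i) := fun σ => by
    rw [partialSum_eq_sum_filter, eq_sub_iff_add_eq, sum_filter_add_sum_filter_not,
      Equiv.sum_comp σ x]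
  intro σ τ h
  rw [hcompl, hcompl]
  congr 1
  refine sum_congr rfl fun i hi => ?_
  rw [h i (by simp at hi; omega)]

theorem dependsOnTail_deviation (x : Fin N → ℝ) {k j : ℕ} (hkj : k ≤ j) :
    DependsOnTail k (deviation x j) := fun σ τ h => by
  rw [deviation, deviation, dependsOnTail_partialSum x hkj σ τ h]

theorem sum_partialSum_mul {x : Fin N → ℝ} {g : Equiv.Perm (Fin N) → ℝ} {m k : ℕ}
    (hg : DependsOnTail k g) (hmk : m ≤ k) (hk : k ≤ N) :
    (k : ℝ) * ∑ σ, partialSum x m σ * g σ = m * ∑ σ, partialSum x k σ * g σ := by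
  rcases Nat.eq_zero_or_pos k with rfl | hk0
  · rw [Nat.le_zero.mp hmk]
  set i₀ : Fin N := ⟨0, by omega⟩
  have hsum : ∀ l ≤ k, ∑ σ, partialSum x l σ * g σ = l * ∑ σ, x (σ i₀) * g σ := by
    intro l hl
    simp_rw [partialSum_eq_sum_filter, sum_mul]
    rw [sum_comm, sum_congr rfl fun i hi => sum_apply_mul_eq_of_mul_swap (j := i₀) x
      (hg.apply_mul_swap (by simp at hi; omega) (by simpa [i₀] using hk0)), sum_const,
      card_filter_val_lt_of_le (hl.trans hk), nsmul_eq_mul]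
  rw [hsum m hmk, hsum k le_rfl]
  ring

theorem sum_deviation_div_sub_mul_eq_zero {x : Fin N → ℝ} {g : Equiv.Perm (Fin N) → ℝ}
    {m k : ℕ} (hg : DependsOnTail k g) (hm : 1 ≤ m) (hmk : m ≤ k) (hk : k ≤ N) :
    ∑ σ, (deviation x m σ / m - deviation x k σ / k) * g σ = 0 := by
  have hm0 : (m : ℝ) ≠ 0 := by positivity
  have hk0 : (k : ℝ) ≠ 0 := by norm_cast; omega
  have hdiff : ∀ σ, (deviation x m σ / m - deviation x k σ / k) * g σ
      = partialSum x m σ * g σ / m - partialSum x k σ * g σ / k := fun σ => by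
    rw [deviation, deviation]
    field_simp
    ring
  rw [sum_congr rfl fun σ _ => hdiff σ, sum_sub_distrib, ← sum_div, ← sum_div,
    div_sub_div _ _ hm0 hk0, mul_comm, sum_partialSum_mul hg hmk hk, sub_self, zero_div]

theorem sum_sq_le_sum_sq_of_sum_sub_mul_eq_zero {ι : Type*} (s : Finset ι) (a b : ι → ℝ)
    (h : ∑ i ∈ s, (a i - b i) * b i = 0) : ∑ i ∈ s, b i ^ 2 ≤ ∑ i ∈ s, a i ^ 2 := by
  have hexp : ∑ i ∈ s, a i ^ 2
      = ∑ i ∈ s, b i ^ 2 + ∑ i ∈ s, (a i - b i) ^ 2 + 2 * ∑ i ∈ s, (a i - b i) * b i := by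
    rw [mul_sum, ← sum_add_distrib, ← sum_add_distrib]
    exact sum_congr rfl fun i _ => by ring
  rw [hexp, h]
  linarith [sum_nonneg fun i (_ : i ∈ s) => sq_nonneg (a i - b i)]

theorem sum_deviation_div_sq_le {x : Fin N → ℝ} {A : Finset (Equiv.Perm (Fin N))} {m k : ℕ}
    (hA : DependsOnTail k (· ∈ A)) (hm : 1 ≤ m) (hmk : m ≤ k) (hk : k ≤ N) :
    ∑ σ ∈ A, (deviation x k σ / k) ^ 2 ≤ ∑ σ ∈ A, (deviation x m σ / m) ^ 2 := by
  refine sum_sq_le_sum_sq_of_sum_sub_mul_eq_zero _ _ _ ?_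
  have hg : DependsOnTail k fun σ => deviation x k σ / k * if σ ∈ A then 1 else 0 :=
    fun σ τ h => by
      simp only [dependsOnTail_deviation x le_rfl σ τ h, show (σ ∈ A) = (τ ∈ A) from hA σ τ h]
  simpa [mul_ite, ← sum_filter] using sum_deviation_div_sub_mul_eq_zero hg hm hmk hk

section Variance

variable (y : Fin N → ℝ)

noncomputable def crossSum (i j : Fin N) : ℝ := ∑ σ : Equiv.Perm (Fin N), y (σ i) * y (σ j)

theorem crossSum_apply_apply (π : Equiv.Perm (Fin N)) (i j : Fin N) :
    crossSum y (π i) (π j) = crossSum y i j :=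
  Equiv.sum_comp (Equiv.mulRight π) fun σ => y (σ i) * y (σ j)

theorem crossSum_self_nonneg (i : Fin N) : 0 ≤ crossSum y i i :=
  sum_nonneg fun _ _ => mul_self_nonneg _

theorem natCast_mul_crossSum_self (i : Fin N) :
    N * crossSum y i i = N ! * ∑ a, y a ^ 2 := by
  have hconst : ∀ i', crossSum y i' i' = crossSum y i i := fun i' => by
    simpa using crossSum_apply_apply y (Equiv.swap i i') i i
  have htotal : ∑ i', crossSum y i' i' = N ! * ∑ a, y a ^ 2 := by
    unfold crossSum
    rw [sum_comm]
    simp_rw [← sq, Equiv.sum_comp _ fun a => y a ^ 2]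
    simp [Fintype.card_perm]
  simpa [hconst] using htotal

theorem crossSum_nonpos (hy : ∑ a, y a = 0) {i j : Fin N} (hij : i ≠ j) :
    crossSum y i j ≤ 0 := by
  have hrow : ∑ j', crossSum y i j' = 0 := by
    unfold crossSum
    rw [sum_comm]
    simp_rw [← mul_sum, Equiv.sum_comp _ y, hy, mul_zero, sum_const_zero]
  have hconst : ∀ j' ∈ univ.erase i, crossSum y i j' = crossSum y i j := fun j' hj' => by
    simpa [Equiv.swap_apply_of_ne_of_ne hij (mem_erase.mp hj').1.symm] using
      crossSum_apply_apply y (Equiv.swap j j') i j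
  have hcard : 0 < #(univ.erase i) := card_pos.mpr ⟨j, mem_erase.mpr ⟨hij.symm, mem_univ j⟩⟩
  rw [← add_sum_erase _ _ (mem_univ i), sum_congr rfl hconst, sum_const, nsmul_eq_mul] at hrow
  nlinarith [crossSum_self_nonneg y i, (Nat.cast_pos (α := ℝ)).mpr hcard]

theorem sum_sq_sum_apply_le (hy : ∑ a, y a = 0) (s : Finset (Fin N)) :
    ∑ σ : Equiv.Perm (Fin N), (∑ i ∈ s, y (σ i)) ^ 2 ≤ #s * (N ! / N * ∑ a, y a ^ 2) := by
  have hexpand : ∑ σ : Equiv.Perm (Fin N), (∑ i ∈ s, y (σ i)) ^ 2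
      = ∑ i ∈ s, ∑ j ∈ s, crossSum y i j := by
    simp_rw [sq, sum_mul_sum, crossSum]
    rw [sum_comm]
    exact sum_congr rfl fun i _ => sum_comm
  have hrow : ∀ i ∈ s, ∑ j ∈ s, crossSum y i j ≤ N ! / N * ∑ a, y a ^ 2 := by
    intro i hi
    have hN : (N : ℝ) ≠ 0 := Nat.cast_ne_zero.mpr (Fin.pos i).ne'
    rw [← add_sum_erase _ _ hi, div_mul_eq_mul_div, ← natCast_mul_crossSum_self y i,
      mul_div_cancel_left₀ _ hN, add_le_iff_nonpos_right]
    exact sum_nonpos fun j hj => crossSum_nonpos y hy (mem_erase.mp hj).1.symm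
  rw [hexpand, ← nsmul_eq_mul, ← sum_const]
  exact sum_le_sum hrow

end Variance

theorem sum_eq_natCast_mul_mean (x : Fin N → ℝ) : ∑ a, x a = N * mean x := by
  rcases Nat.eq_zero_or_pos N with rfl | hN
  · simp
  · rw [mean, mul_div_cancel₀ _ (by positivity)]

theorem sum_sq_sub_mean_le_of_binary {x : Fin N → ℝ} (hx : ∀ a, x a = 0 ∨ x a = 1) :
    ∑ a, (x a - mean x) ^ 2 ≤ N / 4 := by
  have hsq : ∀ a, (x a - mean x) ^ 2 = x a * (1 - 2 * mean x) + mean x ^ 2 := fun a => by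
    rcases hx a with h | h <;> rw [h] <;> ring
  simp_rw [hsq, sum_add_distrib, ← sum_mul, sum_eq_natCast_mul_mean x, sum_const, card_univ,
    Fintype.card_fin, nsmul_eq_mul]
  nlinarith [sq_nonneg (2 * mean x - 1), (N.cast_nonneg : (0 : ℝ) ≤ N)]

theorem sum_deviation_sq_le_of_binary {x : Fin N → ℝ} (hx : ∀ a, x a = 0 ∨ x a = 1) {k : ℕ}
    (hk : k ≤ N) : ∑ σ, deviation x k σ ^ 2 ≤ N ! * (k / 4) := by
  have hcentered : ∑ a, (x a - mean x) = 0 := by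
    rw [sum_sub_distrib, sum_eq_natCast_mul_mean x, sum_const, card_univ, Fintype.card_fin,
      nsmul_eq_mul, sub_self]
  calc ∑ σ, deviation x k σ ^ 2
      = ∑ σ : Equiv.Perm (Fin N), (∑ i ∈ {i : Fin N | (i : ℕ) < k}, (x (σ i) - mean x)) ^ 2 :=
        sum_congr rfl fun σ _ => by rw [deviation_eq_sum_filter x hk]
    _ ≤ k * (N ! / N * ∑ a, (x a - mean x) ^ 2) := by
        simpa [card_filter_val_lt_of_le hk] using
          sum_sq_sum_apply_le (fun a => x a - mean x) hcentered {i : Fin N | (i : ℕ) < k}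
    _ ≤ k * (N ! / N * (N / 4)) := by
        gcongr
        exact sum_sq_sub_mean_le_of_binary hx
    _ ≤ N ! * (k / 4) := by
        rcases Nat.eq_zero_or_pos N with rfl | hN
        · simp [Nat.le_zero.mp hk]
        · exact le_of_eq (by field_simp)

theorem sq_eq_sum_Icc_two_mul_sub_one (k : ℕ) :
    (k : ℝ) ^ 2 = ∑ m ∈ Icc 1 k, (2 * (m : ℝ) - 1) := by
  induction k with
  | zero => simp
  | succ k ih =>
    rw [sum_Icc_succ_top (by omega), ← ih]
    push_cast
    ring

theorem sum_sq_mul_sum_sq_le {Ω : Type*} [Fintype Ω] [DecidableEq Ω] {n : ℕ} {Z : ℕ → Ω → ℝ}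
    {A : ℕ → Finset Ω}
    (hA : (Icc 1 n : Set ℕ).PairwiseDisjoint A)
    (hZ : ∀ m k, 1 ≤ m → m ≤ k → k ≤ n → ∑ ω ∈ A k, Z k ω ^ 2 ≤ ∑ ω ∈ A k, Z m ω ^ 2) :
    ∑ k ∈ Icc 1 n, (k : ℝ) ^ 2 * ∑ ω ∈ A k, Z k ω ^ 2
      ≤ ∑ m ∈ Icc 1 n, (2 * (m : ℝ) - 1) * ∑ ω, Z m ω ^ 2 := by
  have hweight : ∀ m ∈ Icc 1 n, 0 ≤ 2 * (m : ℝ) - 1 := fun m hm => by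
    have : (1 : ℝ) ≤ m := by exact_mod_cast (mem_Icc.mp hm).1
    linarith
  calc ∑ k ∈ Icc 1 n, (k : ℝ) ^ 2 * ∑ ω ∈ A k, Z k ω ^ 2
      = ∑ k ∈ Icc 1 n, ∑ m ∈ Icc 1 k, (2 * (m : ℝ) - 1) * ∑ ω ∈ A k, Z k ω ^ 2 := by
        simp_rw [sq_eq_sum_Icc_two_mul_sub_one, sum_mul]
    _ ≤ ∑ k ∈ Icc 1 n, ∑ m ∈ Icc 1 k, (2 * (m : ℝ) - 1) * ∑ ω ∈ A k, Z m ω ^ 2 := by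
        refine sum_le_sum fun k hk => sum_le_sum fun m hm => ?_
        have hm' := mem_Icc.mp hm
        exact mul_le_mul_of_nonneg_left (hZ m k hm'.1 hm'.2 (mem_Icc.mp hk).2)
          (hweight m (mem_Icc.mpr ⟨hm'.1, hm'.2.trans (mem_Icc.mp hk).2⟩))
    _ = ∑ m ∈ Icc 1 n, (2 * (m : ℝ) - 1) * ∑ ω ∈ (Icc m n).biUnion A, Z m ω ^ 2 := by
        rw [sum_comm' (t' := Icc 1 n) (s' := fun m => Icc m n)
          (fun k m => by simp only [mem_Icc]; omega)]
        refine sum_congr rfl fun m hm => ?_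
        rw [sum_biUnion (hA.subset fun k hk => ?_), mul_sum]
        simp only [coe_Icc, Set.mem_Icc] at hk ⊢
        exact ⟨(mem_Icc.mp hm).1.trans hk.1, hk.2⟩
    _ ≤ ∑ m ∈ Icc 1 n, (2 * (m : ℝ) - 1) * ∑ ω, Z m ω ^ 2 :=
        sum_le_sum fun m hm => mul_le_mul_of_nonneg_left
          (sum_le_sum_of_subset_of_nonneg (subset_univ _) fun _ _ _ => sq_nonneg _)
          (hweight m hm)

theorem two_mul_sub_one_mul_sum_deviation_div_sq_le {x : Fin N → ℝ}
    (hx : ∀ a, x a = 0 ∨ x a = 1) {m : ℕ} (hm : 1 ≤ m) (hmN : m ≤ N) :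
    (2 * (m : ℝ) - 1) * ∑ σ, (deviation x m σ / m) ^ 2 ≤ N ! / 2 := by
  have hm0 : (0 : ℝ) < m := by exact_mod_cast hm
  have hm1 : (1 : ℝ) ≤ m := by exact_mod_cast hm
  simp_rw [div_pow, ← sum_div]
  have hvar := sum_deviation_sq_le_of_binary hx hmN
  rw [mul_div_assoc', div_le_div_iff₀ (by positivity) two_pos]
  have hfac : (0 : ℝ) ≤ N ! := by positivity
  nlinarith [mul_le_mul_of_nonneg_left hvar (by linarith : (0 : ℝ) ≤ 2 * m - 1)]

section Maximal

open scoped Classical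

variable (x : Fin N → ℝ) (n : ℕ) (t : ℝ)

noncomputable def lastExceedance (k : ℕ) : Finset (Equiv.Perm (Fin N)) :=
  {σ | t ≤ |deviation x k σ| ∧ ∀ j, k < j → j ≤ n → |deviation x j σ| < t}

theorem dependsOnTail_mem_lastExceedance (k : ℕ) :
    DependsOnTail k (· ∈ lastExceedance x n t k) := fun σ τ h => by
  have hdev : ∀ j, k ≤ j → deviation x j σ = deviation x j τ := fun j hj =>
    dependsOnTail_deviation x hj σ τ h
  simp +contextual [lastExceedance, hdev, le_of_lt]

theorem pairwiseDisjoint_lastExceedance :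
    (Icc 1 n : Set ℕ).PairwiseDisjoint (lastExceedance x n t) := by
  have hlt : ∀ a b, a < b → b ≤ n →
      Disjoint (lastExceedance x n t a) (lastExceedance x n t b) :=
    fun a b hab hbn => disjoint_left.mpr fun σ ha hb => by
      simp only [lastExceedance, mem_filter, mem_univ, true_and] at ha hb
      exact (ha.2 b hab hbn).not_ge hb.1
  intro a ha b hb hab
  simp only [coe_Icc, Set.mem_Icc] at ha hb
  rcases hab.lt_or_gt with h | h
  · exact hlt a b h hb.2
  · exact (hlt b a h ha.2).symm

theorem filter_exists_subset_biUnion_lastExceedance :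
    ({σ | ∃ k, 1 ≤ k ∧ k ≤ n ∧ t ≤ |deviation x k σ|} : Finset (Equiv.Perm (Fin N)))
      ⊆ (Icc 1 n).biUnion (lastExceedance x n t) := by
  intro σ hσ
  obtain ⟨k, hk1, hkn, hkt⟩ := (mem_filter.mp hσ).2
  set P : ℕ → Prop := fun j => t ≤ |deviation x j σ|
  refine mem_biUnion.mpr ⟨Nat.findGreatest P n, mem_Icc.mpr ⟨?_, Nat.findGreatest_le n⟩, ?_⟩
  · exact hk1.trans (Nat.le_findGreatest hkn hkt)
  · simp only [lastExceedance, mem_filter, mem_univ, true_and]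
    exact ⟨Nat.findGreatest_spec (P := P) hkn hkt,
      fun j hj hjn => not_le.mp (Nat.findGreatest_is_greatest hj hjn)⟩

end Maximal

open Classical in
theorem card_filter_exists_mul_sq_le {x : Fin N → ℝ} (hx : ∀ a, x a = 0 ∨ x a = 1) {n : ℕ}
    (hn : n ≤ N) {t : ℝ} (ht : 0 ≤ t) :
    #{σ | ∃ k, 1 ≤ k ∧ k ≤ n ∧ t ≤ |deviation x k σ|} * t ^ 2 ≤ N ! * (n / 2 : ℝ) := by
  set A := lastExceedance x n t
  have hcard : #{σ | ∃ k, 1 ≤ k ∧ k ≤ n ∧ t ≤ |deviation x k σ|} ≤ ∑ k ∈ Icc 1 n, #(A k) :=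
    (card_le_card (filter_exists_subset_biUnion_lastExceedance x n t)).trans card_biUnion_le
  calc (#{σ | ∃ k, 1 ≤ k ∧ k ≤ n ∧ t ≤ |deviation x k σ|} : ℝ) * t ^ 2
      ≤ ∑ k ∈ Icc 1 n, #(A k) * t ^ 2 := by
        rw [← sum_mul]
        gcongr
        exact_mod_cast hcard
    _ ≤ ∑ k ∈ Icc 1 n, ∑ σ ∈ A k, deviation x k σ ^ 2 := by
        refine sum_le_sum fun k _ => ?_
        rw [← nsmul_eq_mul]
        exact card_nsmul_le_sum _ _ _ fun σ hσ => by
          simpa using pow_le_pow_left₀ ht (mem_filter.mp hσ).2.1 2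
    _ = ∑ k ∈ Icc 1 n, (k : ℝ) ^ 2 * ∑ σ ∈ A k, (deviation x k σ / k) ^ 2 := by
        refine sum_congr rfl fun k hk => ?_
        have hk0 : (k : ℝ) ≠ 0 := by have := (mem_Icc.mp hk).1; positivity
        rw [mul_sum]
        exact sum_congr rfl fun σ _ => by field_simp
    _ ≤ ∑ m ∈ Icc 1 n, (2 * (m : ℝ) - 1) * ∑ σ, (deviation x m σ / m) ^ 2 :=
        sum_sq_mul_sum_sq_le (pairwiseDisjoint_lastExceedance x n t) fun m k hm hmk hkn =>
          sum_deviation_div_sq_le (dependsOnTail_mem_lastExceedance x n t k) hm hmk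
            (hkn.trans hn)
    _ ≤ ∑ _m ∈ Icc 1 n, (N ! / 2 : ℝ) := sum_le_sum fun m hm =>
        two_mul_sub_one_mul_sum_deviation_div_sq_le hx (mem_Icc.mp hm).1
          ((mem_Icc.mp hm).2.trans hn)
    _ = N ! * (n / 2 : ℝ) := by
        rw [sum_const, Nat.card_Icc, nsmul_eq_mul, Nat.add_sub_cancel]
        ring

end SamplingWithoutReplacement

open SamplingWithoutReplacement

theorem stmt_3_general (N n : ℕ) (hn : 1 ≤ n) (hN : n ≤ N)
    (x : Fin N → ℝ) (hx : ∀ i, x i = 0 ∨ x i = 1) (θ : ℝ) (hθ : 0 < θ) :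
    @PMF.toMeasure _ ⊤ (PMF.uniformOfFintype (Equiv.Perm (Fin N)))
      {σ : Equiv.Perm (Fin N) | ∃ k, 1 ≤ k ∧ k ≤ n ∧
        Real.sqrt (n * θ) ≤
          |(∑ i : Fin N, if (i : ℕ) < k then x (σ i) else 0) -
            ((∑ i : Fin N, x i) / N) * k|}
      ≤ ENNReal.ofReal (1 / θ) := by
  classical
  set E : Finset (Equiv.Perm (Fin N)) :=
    {σ | ∃ k, 1 ≤ k ∧ k ≤ n ∧ Real.sqrt (n * θ) ≤ |deviation x k σ|}
  have hbound := card_filter_exists_mul_sq_le hx hN (Real.sqrt_nonneg (n * θ))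
  rw [Real.sq_sqrt (by positivity)] at hbound
  have hfrac : (#E : ℝ) / N ! ≤ 1 / θ := by
    have hn0 : (0 : ℝ) < n := by exact_mod_cast hn
    rw [div_le_div_iff₀ (by positivity) hθ]
    nlinarith [(by positivity : (0 : ℝ) < N !)]
  have hset : {σ : Equiv.Perm (Fin N) | ∃ k, 1 ≤ k ∧ k ≤ n ∧ Real.sqrt (n * θ) ≤
      |(∑ i : Fin N, if (i : ℕ) < k then x (σ i) else 0) - ((∑ i : Fin N, x i) / N) * k|} = E := by
    simp [E, deviation, partialSum, mean]
  rw [hset, PMF.toMeasure_uniformOfFintype_top_apply_finset, Fintype.card_perm,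
    Fintype.card_fin, ← ENNReal.ofReal_natCast, ← ENNReal.ofReal_natCast,
    ← ENNReal.ofReal_div_of_pos (by positivity)]
  exact ENNReal.ofReal_le_ofReal hfrac

/-- Sampling without replacement is modeled by a uniformly random permutation `σ`
of the population indices; `X i = x (σ i)` and `S k = ∑_{i < k} X i`. -/
theorem stmt_3 (N n : ℕ) (hn : 1 ≤ n) (hN : n ≤ N) (hNpos : 0 < N)
    (x : Fin N → ℝ) (hx : ∀ i, x i = 0 ∨ x i = 1) (θ : ℝ) (hθ : 0 < θ) :
    @PMF.toMeasure _ ⊤ (PMF.uniformOfFintype (Equiv.Perm (Fin N)))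
      {σ : Equiv.Perm (Fin N) | ∃ k, 1 ≤ k ∧ k ≤ n ∧
        Real.sqrt (n * θ) ≤
          |(∑ i : Fin N, if (i : ℕ) < k then x (σ i) else 0) -
            ((∑ i : Fin N, x i) / N) * k|}
      ≤ ENNReal.ofReal (1 / θ) :=
  stmt_3_general N n hn hN x hx θ hθ
end

section
/- Let B₁, …, Bₙ be i.i.d. Bernoulli(p) random variables with p ∈ [0,1], and define P = (1 + ∑_{j=1}^n B_j)/(n+1). If p is itself distributed uniformly on {1/S, …, 1} (or more generally stochastically greater than uniform on [0,1]) then P is stochastically greater than the uniform distribution on [0,1]: for all t ∈ [0,1], ℙ(P ≤ t) ≤ t. -/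
open MeasureTheory Set
open scoped ENNReal

/-!
Given the ideal p-value `p`, the event `P ≤ t` is `{Bin(n, p) ≤ m}` with `m + 1 = ⌊t (n + 1)⌋`.
Differentiating in `p` makes the binomial sum telescope, so this probability is `∫_p^1 g`, where
`g` is the `Beta(m+1, n-m)` density of the `(m+1)`-th order statistic of `n` uniforms. By Tonelli,
averaging over `p ~ μ` gives `∫_0^1 g(x) μ(p < x) dx ≤ ∫_0^1 x g(x) dx = (m+1)/(n+1) ≤ t`.
-/

set_option linter.deprecated false

noncomputable section

def binomCDF (n m : ℕ) (q : ℝ) : ℝ :=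
  ∑ k ∈ Finset.range (m + 1), n.choose k * q ^ k * (1 - q) ^ (n - k)

/-- The density of the `(m+1)`-th smallest of `n` independent uniforms on `[0,1]`, i.e. of
`Beta(m+1, n-m)`; it is `0` when `n ≤ m`. -/
def orderStatDensity (n m : ℕ) (x : ℝ) : ℝ :=
  n * (n - 1).choose m * x ^ m * (1 - x) ^ (n - 1 - m)

end

theorem continuous_orderStatDensity (n m : ℕ) : Continuous (orderStatDensity n m) := by
  unfold orderStatDensity
  fun_prop

theorem orderStatDensity_nonneg (n m : ℕ) {x : ℝ} (hx : x ∈ Icc 0 1) :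
    0 ≤ orderStatDensity n m x := by
  obtain ⟨hx0, hx1⟩ := hx
  have : 0 ≤ 1 - x := sub_nonneg.2 hx1
  unfold orderStatDensity
  positivity

theorem Nat.add_one_mul_choose_add_one_eq (n m : ℕ) :
    (m + 1) * n.choose (m + 1) = n * (n - 1).choose m := by
  cases n with
  | zero => simp
  | succ n => simpa [mul_comm] using (Nat.add_one_mul_choose_eq n m).symm

theorem Nat.sub_add_one_mul_choose_add_one_eq (n m : ℕ) :
    (n - (m + 1)) * n.choose (m + 1) = n * (n - 1).choose (m + 1) := by
  cases n with
  | zero => simp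
  | succ n => simpa [mul_comm] using (Nat.choose_mul_succ_eq n (m + 1)).symm

theorem hasDerivAt_one_sub_pow (k : ℕ) (q : ℝ) :
    HasDerivAt (fun q : ℝ => (1 - q) ^ k) (-(k * (1 - q) ^ (k - 1))) q := by
  refine ((hasDerivAt_pow k (1 - q)).comp q ((hasDerivAt_id q).const_sub 1)).congr_deriv ?_
  simp

theorem hasDerivAt_binomial_term (n m : ℕ) (q : ℝ) :
    HasDerivAt (fun q : ℝ => n.choose (m + 1) * q ^ (m + 1) * (1 - q) ^ (n - (m + 1)))
      (orderStatDensity n m q - orderStatDensity n (m + 1) q) q := by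
  refine (((hasDerivAt_pow (m + 1) q).const_mul (n.choose (m + 1) : ℝ)).mul
    (hasDerivAt_one_sub_pow (n - (m + 1)) q)).congr_deriv ?_
  have hA : ((m : ℝ) + 1) * n.choose (m + 1) = n * (n - 1).choose m := by
    exact_mod_cast Nat.add_one_mul_choose_add_one_eq n m
  have hB : ((n - (m + 1) : ℕ) : ℝ) * n.choose (m + 1) = n * (n - 1).choose (m + 1) := by
    exact_mod_cast Nat.sub_add_one_mul_choose_add_one_eq n m
  rw [orderStatDensity, orderStatDensity, show n - 1 - m = n - (m + 1) by omega,
    show n - 1 - (m + 1) = n - (m + 1) - 1 by omega, Nat.add_sub_cancel]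
  push_cast
  linear_combination q ^ m * (1 - q) ^ (n - (m + 1)) * hA
    - q ^ (m + 1) * (1 - q) ^ (n - (m + 1) - 1) * hB

theorem hasDerivAt_binomCDF (n m : ℕ) (q : ℝ) :
    HasDerivAt (binomCDF n m) (-orderStatDensity n m q) q := by
  induction m with
  | zero =>
    have hCDF : binomCDF n 0 = fun q => (1 - q) ^ n := by
      ext x; simp [binomCDF]
    rw [hCDF]
    refine (hasDerivAt_one_sub_pow n q).congr_deriv ?_
    simp [orderStatDensity]
  | succ m ih =>
    have hCDF : binomCDF n (m + 1) = fun q =>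
        binomCDF n m q + n.choose (m + 1) * q ^ (m + 1) * (1 - q) ^ (n - (m + 1)) := by
      ext x; simp [binomCDF, Finset.sum_range_succ _ (m + 1)]
    rw [hCDF]
    refine (ih.add (hasDerivAt_binomial_term n m q)).congr_deriv ?_
    ring

theorem binomCDF_zero {n m : ℕ} : binomCDF n m 0 = 1 := by
  simp [binomCDF, zero_pow_eq]

theorem binomCDF_one {n m : ℕ} (hm : m < n) : binomCDF n m 1 = 0 := by
  refine Finset.sum_eq_zero fun k hk => ?_
  have : n - k ≠ 0 := by rw [Finset.mem_range] at hk; omega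
  simp [this]

theorem binomCDF_eq_integral {n m : ℕ} (hm : m < n) (q : ℝ) :
    binomCDF n m q = ∫ x in q..1, orderStatDensity n m x := by
  have hFTC := intervalIntegral.integral_eq_sub_of_hasDerivAt
    (fun x _ => hasDerivAt_binomCDF n m x)
    ((continuous_orderStatDensity n m).neg.intervalIntegrable q 1)
  rw [intervalIntegral.integral_neg, binomCDF_one hm] at hFTC
  linarith

theorem integral_orderStatDensity {n m : ℕ} (hm : m < n) :
    ∫ x in (0 : ℝ)..1, orderStatDensity n m x = 1 := by
  rw [← binomCDF_eq_integral hm, binomCDF_zero]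

-- Reduces the mean of `orderStatDensity n m` to a total mass, avoiding Beta integrals.
theorem mul_orderStatDensity (n m : ℕ) (x : ℝ) :
    x * orderStatDensity n m x = (m + 1) / (n + 1) * orderStatDensity (n + 1) (m + 1) x := by
  have hA : ((m : ℝ) + 1) * n.choose (m + 1) = n * (n - 1).choose m := by
    exact_mod_cast Nat.add_one_mul_choose_add_one_eq n m
  rw [orderStatDensity, orderStatDensity, Nat.add_sub_cancel,
    show n - 1 - m = n - (m + 1) by omega]
  push_cast
  field_simp
  linear_combination -x ^ (m + 1) * (1 - x) ^ (n - (m + 1)) * hA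

theorem integral_mul_orderStatDensity {n m : ℕ} (hm : m < n) :
    ∫ x in (0 : ℝ)..1, x * orderStatDensity n m x = (m + 1) / (n + 1) := by
  simp_rw [mul_orderStatDensity n m, intervalIntegral.integral_const_mul,
    integral_orderStatDensity (Nat.add_lt_add_right hm 1), mul_one]

theorem lintegral_setLIntegral_Ioc_le {μ : Measure ℝ} [SFinite μ]
    (hμ : ∀ t ∈ Icc (0 : ℝ) 1, μ (Iic t) ≤ ENNReal.ofReal t) {g : ℝ → ℝ≥0∞} (hg : Measurable g) :
    ∫⁻ p, (∫⁻ x in Ioc p 1, g x) ∂μ ≤ ∫⁻ x in Ioc 0 1, ENNReal.ofReal x * g x := by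
  have hmeas : Measurable (Function.uncurry fun p x => (Ioc p 1).indicator g x) := by
    refine Measurable.ite ?_ (hg.comp measurable_snd) measurable_const
    exact (measurableSet_lt measurable_fst measurable_snd).inter
      (measurableSet_le measurable_snd measurable_const)
  have hpointwise (x : ℝ) : ∫⁻ p, (Ioc p 1).indicator g x ∂μ
      ≤ (Ioc 0 1).indicator (fun x => ENNReal.ofReal x * g x) x := by
    have hind : (fun p => (Ioc p 1).indicator g x) =
        (Iio x).indicator fun _ => (Iic 1).indicator g x := by
      ext p; by_cases hp : p < x <;> by_cases hx : x ≤ 1 <;> simp [indicator, hp, hx]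
    rw [hind, lintegral_indicator_const measurableSet_Iio]
    rcases le_or_gt x 0 with hx0 | hx0
    · have : μ (Iio x) = 0 := le_antisymm
        ((measure_mono fun y (hy : y < x) => (hy.trans_le hx0).le).trans
          ((hμ 0 ⟨le_rfl, zero_le_one⟩).trans_eq ENNReal.ofReal_zero)) zero_le
      simp [this]
    rcases le_or_gt x 1 with hx1 | hx1
    · rw [indicator_of_mem (show x ∈ Iic 1 from hx1),
        indicator_of_mem (show x ∈ Ioc 0 1 from ⟨hx0, hx1⟩), mul_comm (ENNReal.ofReal x)]
      exact mul_le_mul_right ((measure_mono Iio_subset_Iic_self).trans (hμ x ⟨hx0.le, hx1⟩)) _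
    · simp [indicator_of_notMem (show x ∉ Iic 1 from not_le.2 hx1)]
  calc ∫⁻ p, (∫⁻ x in Ioc p 1, g x) ∂μ = ∫⁻ p, (∫⁻ x, (Ioc p 1).indicator g x) ∂μ := by
        simp_rw [lintegral_indicator measurableSet_Ioc]
    _ = ∫⁻ x, ∫⁻ p, (Ioc p 1).indicator g x ∂μ := lintegral_lintegral_swap hmeas.aemeasurable
    _ ≤ ∫⁻ x, (Ioc 0 1).indicator (fun x => ENNReal.ofReal x * g x) x := lintegral_mono hpointwise
    _ = ∫⁻ x in Ioc 0 1, ENNReal.ofReal x * g x := lintegral_indicator measurableSet_Ioc _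

theorem ofReal_binomCDF_eq_setLIntegral {n m : ℕ} (hm : m < n) {q : ℝ} (hq : q ∈ Icc 0 1) :
    ENNReal.ofReal (binomCDF n m q) = ∫⁻ x in Ioc q 1, ENNReal.ofReal (orderStatDensity n m x) := by
  rw [binomCDF_eq_integral hm, intervalIntegral.integral_of_le hq.2]
  exact ofReal_integral_eq_lintegral_ofReal (continuous_orderStatDensity n m).integrableOn_Ioc
    (ae_restrict_of_forall_mem measurableSet_Ioc fun x hx =>
      orderStatDensity_nonneg n m ⟨hq.1.trans hx.1.le, hx.2⟩)

theorem setLIntegral_mul_orderStatDensity {n m : ℕ} (hm : m < n) :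
    ∫⁻ x in Ioc 0 1, ENNReal.ofReal x * ENNReal.ofReal (orderStatDensity n m x) =
      ENNReal.ofReal ((m + 1) / (n + 1)) := by
  have hnonneg : ∀ x ∈ Ioc (0 : ℝ) 1, 0 ≤ x * orderStatDensity n m x := fun x hx =>
    mul_nonneg hx.1.le (orderStatDensity_nonneg n m ⟨hx.1.le, hx.2⟩)
  rw [← integral_mul_orderStatDensity hm, intervalIntegral.integral_of_le zero_le_one,
    ofReal_integral_eq_lintegral_ofReal
      (show Continuous fun x => x * orderStatDensity n m x from
        continuous_id.mul (continuous_orderStatDensity n m)).integrableOn_Ioc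
      (ae_restrict_of_forall_mem measurableSet_Ioc hnonneg)]
  refine setLIntegral_congr_fun measurableSet_Ioc fun x hx => ?_
  rw [ENNReal.ofReal_mul hx.1.le]

theorem Ioc_coe_min_toNNReal_one_subset (p : ℝ) :
    Ioc ((min p.toNNReal 1 : NNReal) : ℝ) 1 ⊆ Ioc p 1 := by
  rintro x ⟨hpx, hx1⟩
  simp only [NNReal.coe_min, Real.coe_toNNReal', NNReal.coe_one, min_lt_iff, max_lt_iff] at hpx
  exact ⟨(hpx.resolve_right hx1.not_gt).1, hx1⟩

theorem PMF.binomial_apply_eq_ofReal (q : NNReal) (hq : q ≤ 1) (n : ℕ) (k : Fin (n + 1)) :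
    PMF.binomial q hq n k = ENNReal.ofReal (n.choose k * q ^ (k : ℕ) * (1 - q) ^ (n - k)) := by
  rw [PMF.binomial_apply_of_le (Nat.lt_succ_iff.1 k.isLt), Fin.ofNat_eq_cast, Fin.cast_val_eq_self]

theorem PMF.toMeasure_binomial_setOf_le (q : NNReal) (hq : q ≤ 1) {n m : ℕ} (hm : m ≤ n) :
    (PMF.binomial q hq n).toMeasure {k | (k : ℕ) ≤ m} = ENNReal.ofReal (binomCDF n m q) := by
  have hrange : (Finset.range (n + 1)).filter (· ≤ m) = Finset.range (m + 1) := by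
    ext k; simp only [Finset.mem_filter, Finset.mem_range]; omega
  have hq' : (q : ℝ) ≤ 1 := hq
  rw [PMF.toMeasure_apply_fintype, binomCDF, ENNReal.ofReal_sum_of_nonneg fun k _ => by
    have : (0 : ℝ) ≤ 1 - q := sub_nonneg.2 hq'
    positivity]
  simp_rw [indicator_apply, mem_setOf_eq, PMF.binomial_apply_eq_ofReal]
  rw [Fin.sum_univ_eq_sum_range (fun k => if k ≤ m then
    ENNReal.ofReal (n.choose k * q ^ k * (1 - q) ^ (n - k)) else 0), ← Finset.sum_filter, hrange]

theorem PMF.measurable_binomial_toMeasure (n : ℕ) :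
    Measurable fun p : ℝ => (PMF.binomial (min p.toNNReal 1) (min_le_right _ _) n).toMeasure := by
  refine Measure.measurable_of_measurable_coe _ fun s _ => ?_
  simp_rw [PMF.toMeasure_apply_fintype]
  refine Finset.measurable_sum _ fun k _ => ?_
  by_cases hk : k ∈ s
  · simp only [indicator_of_mem hk, PMF.binomial_apply]
    fun_prop
  · simp [indicator_of_notMem hk]

theorem preimage_mcPValue_Iic {n : ℕ} {t : ℝ} (ht : 0 ≤ t) :
    (fun k : Fin (n + 1) => (1 + ((k : ℕ) : ℝ)) / ((n : ℝ) + 1)) ⁻¹' Iic t =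
      {k : Fin (n + 1) | (k : ℕ) < ⌊t * (n + 1)⌋₊} := by
  ext k
  rw [mem_preimage, mem_Iic, div_le_iff₀ (by positivity), mem_setOf_eq, Nat.lt_iff_add_one_le,
    Nat.le_floor_iff (by positivity)]
  push_cast
  rw [add_comm]

theorem stmt_5_general (n : ℕ) (μ : Measure ℝ) [IsProbabilityMeasure μ]
    (hsuper : ∀ t ∈ Set.Icc (0 : ℝ) 1, μ (Set.Iic t) ≤ ENNReal.ofReal t)
    (t : ℝ) (ht : t ∈ Set.Icc (0 : ℝ) 1) :
    (μ.bind fun p =>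
        ((PMF.binomial (min (Real.toNNReal p) 1) (min_le_right _ _) n).toMeasure.map
          fun k : Fin (n + 1) => (1 + ((k : ℕ) : ℝ)) / ((n : ℝ) + 1)))
      (Set.Iic t) ≤ ENNReal.ofReal t := by
  have hfloor : (⌊t * (n + 1)⌋₊ : ℝ) ≤ t * (n + 1) := Nat.floor_le (by positivity [ht.1])
  rw [Measure.bind_apply measurableSet_Iic]
  swap
  · exact ((Measure.measurable_map _ measurable_from_top).comp
      (PMF.measurable_binomial_toMeasure n)).aemeasurable
  simp_rw [Measure.map_apply measurable_from_top measurableSet_Iic, preimage_mcPValue_Iic ht.1]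
  rcases h : ⌊t * (n + 1)⌋₊ with _ | m
  · simp
  rw [h] at hfloor
  push_cast at hfloor
  simp_rw [Nat.lt_succ_iff]
  rcases lt_or_ge m n with hmn | hnm
  · calc ∫⁻ p, (PMF.binomial (min p.toNNReal 1) _ n).toMeasure {k | (k : ℕ) ≤ m} ∂μ
        = ∫⁻ p, ENNReal.ofReal (binomCDF n m (min p.toNNReal 1 : NNReal)) ∂μ := by
          simp_rw [PMF.toMeasure_binomial_setOf_le _ _ hmn.le]
      _ ≤ ∫⁻ p, (∫⁻ x in Ioc p 1, ENNReal.ofReal (orderStatDensity n m x)) ∂μ := by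
          refine lintegral_mono fun p => ?_
          rw [ofReal_binomCDF_eq_setLIntegral hmn ⟨NNReal.coe_nonneg _, min_le_right _ _⟩]
          exact lintegral_mono_set (Ioc_coe_min_toNNReal_one_subset p)
      _ ≤ ∫⁻ x in Ioc 0 1, ENNReal.ofReal x * ENNReal.ofReal (orderStatDensity n m x) :=
          lintegral_setLIntegral_Ioc_le hsuper
            (continuous_orderStatDensity n m).measurable.ennreal_ofReal
      _ = ENNReal.ofReal ((m + 1) / (n + 1)) := setLIntegral_mul_orderStatDensity hmn
      _ ≤ ENNReal.ofReal t :=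
          ENNReal.ofReal_le_ofReal ((div_le_iff₀ (by positivity)).2 hfloor)
  · have ht1 : 1 ≤ t := by
      have : (n : ℝ) ≤ m := mod_cast hnm
      nlinarith
    calc _ ≤ ∫⁻ _, 1 ∂μ := lintegral_mono fun p => prob_le_one
      _ ≤ ENNReal.ofReal t := by simpa using ht1

/-- The Monte Carlo p-value `P = (1 + Binomial(n, p))/(n+1)` (the sum of `n` i.i.d.
Bernoulli(p) samples is Binomial(n, p)), where the ideal p-value `p` is drawn from
a super-uniform distribution `μ` supported on `[0,1]`, is itself super-uniform. -/
theorem stmt_5 (n : ℕ) (μ : Measure ℝ) [IsProbabilityMeasure μ]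
    (hsupp : μ (Set.Icc 0 1) = 1)
    (hsuper : ∀ t ∈ Set.Icc (0 : ℝ) 1, μ (Set.Iic t) ≤ ENNReal.ofReal t)
    (t : ℝ) (ht : t ∈ Set.Icc (0 : ℝ) 1) :
    (μ.bind fun p =>
        ((PMF.binomial (min (Real.toNNReal p) 1) (min_le_right _ _) n).toMeasure.map
          fun k : Fin (n + 1) => (1 + ((k : ℕ) : ℝ)) / ((n : ℝ) + 1)))
      (Set.Iic t) ≤ ENNReal.ofReal t :=
  stmt_5_general n μ hsuper t ht
end

section
/- Let r* be the BH critical rank for sorted p-values p_(1) ≤ ⋯ ≤ p_(m) with level α, and τ* = (r*/m)·α. Suppose r̂ ∈ {r*, …, m} satisfies: exactly m − r̂ of the p-values are strictly greater than (r̂/m)·α, and the remaining r̂ p-values are at most (r̂/m)·α. Then r̂ = r*. -/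
/-- If `p` is monotone on `{1, …, m}` and exceeds `t` at `r`, it exceeds `t` on all of `{r, …, m}`. -/
theorem MonotoneOn.sub_le_ncard_lt {β : Type*} [Preorder β] {p : ℕ → β} {m r : ℕ}
    (hmono : MonotoneOn p (Set.Icc 1 m)) (hr : r ∈ Set.Icc 1 m) {t : β} (ht : t < p r) :
    m + 1 - r ≤ Set.ncard {i | i ∈ Set.Icc 1 m ∧ t < p i} := by
  have htail : Set.Icc r m ⊆ {i | i ∈ Set.Icc 1 m ∧ t < p i} := fun i hi =>
    have hi' : i ∈ Set.Icc 1 m := ⟨hr.1.trans hi.1, hi.2⟩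
    ⟨hi', ht.trans_le (hmono hr hi' hi.1)⟩
  have hfin : {i | i ∈ Set.Icc 1 m ∧ t < p i}.Finite :=
    (Set.finite_Icc 1 m).subset fun _ hi => hi.1
  calc m + 1 - r = (Set.Icc r m).ncard := by simp [Set.ncard_eq_toFinset_card']
    _ ≤ _ := Set.ncard_le_ncard htail hfin

theorem stmt_8_general (m : ℕ) (α : ℝ)
    (p : ℕ → ℝ) (hmono : MonotoneOn p (Set.Icc 1 m))
    (rstar : ℕ)
    (hr : rstar = sSup {r : ℕ | r ∈ Set.Icc 1 m ∧ p r ≤ (r : ℝ) / m * α})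
    (rhat : ℕ) (h1 : rstar ≤ rhat) (h2 : rhat ≤ m)
    (hcount : Set.ncard {i | i ∈ Set.Icc 1 m ∧ (rhat : ℝ) / m * α < p i} = m - rhat) :
    rhat = rstar := by
  rcases Nat.eq_zero_or_pos rhat with h0 | hpos
  · omega
  have hrhat : rhat ∈ Set.Icc 1 m := ⟨hpos, h2⟩
  -- Only `m - rhat` p-values exceed the threshold, so `p rhat` cannot be one of them.
  have hple : p rhat ≤ (rhat : ℝ) / m * α := by
    by_contra! hgt
    have := hmono.sub_le_ncard_lt hrhat hgt
    omega
  have hle : rhat ≤ rstar :=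
    hr ▸ le_csSup ⟨m, fun _ hr => hr.1.2⟩ ⟨hrhat, hple⟩
  omega

theorem stmt_8 (m : ℕ) (hm : 1 ≤ m) (α : ℝ) (hα : α ∈ Set.Ioo (0 : ℝ) 1)
    (p : ℕ → ℝ) (hmono : MonotoneOn p (Set.Icc 1 m))
    (hp : ∀ i ∈ Set.Icc 1 m, p i ∈ Set.Icc (0 : ℝ) 1)
    (rstar : ℕ)
    (hr : rstar = sSup {r : ℕ | r ∈ Set.Icc 1 m ∧ p r ≤ (r : ℝ) / m * α})
    (rhat : ℕ) (h1 : rstar ≤ rhat) (h2 : rhat ≤ m)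
    (hcount : Set.ncard {i | i ∈ Set.Icc 1 m ∧ (rhat : ℝ) / m * α < p i} = m - rhat)
    (hrest : ∀ i ∈ Set.Icc 1 m,
      (rhat : ℝ) / m * α < p i ∨ p i ≤ (rhat : ℝ) / m * α) :
    rhat = rstar :=
  stmt_8_general m α p hmono rstar hr rhat h1 h2 hcount
end

section
/- Consider m hypotheses of which a subset H₀ ⊆ {1,…,m} (with |H₀| = m₀) are true nulls, and let π₀ = m₀/m. If the p-values (P₁,…,P_m) are independent and each null p-value is stochastically greater than uniform on [0,1], then the BH procedure at level α has FDR ≤ π₀·α. -/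
/-! Write `R` for the BH rank and `Rᵢ` for the rank computed after replacing `pᵢ` by `0`.
Leave-one-out: if `pᵢ ≤ Rα/m` or `pᵢ ≤ Rᵢα/m`, zeroing `pᵢ` changes no count at the relevant
ranks, so `R = Rᵢ`; hence `1{pᵢ ≤ Rα/m}/R = 1{pᵢ ≤ Rᵢα/m}/Rᵢ` and the FDP is
`∑_{i ∈ H₀} 1{pᵢ ≤ Rᵢα/m}/Rᵢ`. As `Rᵢ` is a function of the other p-values, it is independent
of `pᵢ`; splitting on `Rᵢ = r` and using `ℙ(pᵢ ≤ rα/m) ≤ rα/m` bounds each summand's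
expectation by `α/m`. -/

open MeasureTheory ProbabilityTheory

/-- The BH critical rank: `r* = max{r ≤ m : at least r of the p-values are ≤ (r/m)·α}`,
which for sorted p-values equals `max{r : p_(r) ≤ (r/m)·α}`. -/
noncomputable def bhRank (m : ℕ) (α : ℝ) (p : Fin m → ℝ) : ℕ :=
  sSup {r | r ≤ m ∧ r ≤ Set.ncard {i : Fin m | p i ≤ (r : ℝ) / m * α}}

/-- The BH rejection set: indices with p-value at most the BH threshold `(r*/m)·α`. -/
noncomputable def bhReject (m : ℕ) (α : ℝ) (p : Fin m → ℝ) : Set (Fin m) :=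
  {i | p i ≤ (bhRank m α p : ℝ) / m * α}

/-- False discovery proportion of a rejection set `R` for true nulls `H0`. -/
noncomputable def fdp (m : ℕ) (H0 : Set (Fin m)) (R : Set (Fin m)) : ℝ :=
  (Set.ncard (R ∩ H0) : ℝ) / max (Set.ncard R) 1

noncomputable def bhCount (m : ℕ) (α : ℝ) (p : Fin m → ℝ) (r : ℕ) : ℕ :=
  Set.ncard {i : Fin m | p i ≤ (r : ℝ) / m * α}

section BHCombinatorics

variable {m : ℕ} {α : ℝ} {p : Fin m → ℝ}

lemma bhCount_mono (hα : 0 ≤ α) : Monotone (bhCount m α p) := fun r s hrs =>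
  Set.ncard_le_ncard (fun i (hi : p i ≤ (r : ℝ) / m * α) => hi.trans (by gcongr)) (Set.toFinite _)

lemma bhCount_le (r : ℕ) : bhCount m α p r ≤ m :=
  (Set.ncard_le_card _).trans_eq (Nat.card_fin m)

lemma isGreatest_bhRank :
    IsGreatest {r | r ≤ m ∧ r ≤ bhCount m α p r} (bhRank m α p) := by
  have hbdd : BddAbove {r | r ≤ m ∧ r ≤ bhCount m α p r} := ⟨m, fun r hr => hr.1⟩
  exact ⟨Nat.sSup_mem ⟨0, by simp⟩ hbdd, fun r hr => le_csSup hbdd hr⟩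

lemma bhRank_eq_iff {r : ℕ} :
    bhRank m α p = r ↔ IsGreatest {s | s ≤ m ∧ s ≤ bhCount m α p s} r :=
  ⟨fun h => h ▸ isGreatest_bhRank, IsGreatest.csSup_eq⟩

lemma bhRank_le : bhRank m α p ≤ m := isGreatest_bhRank.1.1

lemma ncard_bhReject (hα : 0 ≤ α) : (bhReject m α p).ncard = bhRank m α p := by
  obtain ⟨⟨-, hRc⟩, hmax⟩ := isGreatest_bhRank (m := m) (α := α) (p := p)
  exact le_antisymm (hmax ⟨bhCount_le _, bhCount_mono hα hRc⟩) hRc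

lemma fdp_bhReject_eq_sum (hα : 0 ≤ α) (H : Finset (Fin m)) :
    fdp m H (bhReject m α p) = ∑ i ∈ H,
      if p i ≤ (bhRank m α p : ℝ) / m * α then ((bhRank m α p : ℝ))⁻¹ else 0 := by
  classical
  have hcap : bhReject m α p ∩ H = H.filter fun i => p i ≤ (bhRank m α p : ℝ) / m * α := by
    ext i
    simp [bhReject, and_comm]
  have hcard : (H.filter fun i => p i ≤ (bhRank m α p : ℝ) / m * α).card ≤ bhRank m α p := by
    rw [← Set.ncard_coe_finset, ← hcap]
    exact (Set.ncard_le_ncard Set.inter_subset_left (Set.toFinite _)).trans_eq (ncard_bhReject hα)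
  rw [← Finset.sum_filter, Finset.sum_const, nsmul_eq_mul, fdp, hcap, Set.ncard_coe_finset,
    ncard_bhReject hα, div_eq_mul_inv]
  rcases Nat.eq_zero_or_pos (bhRank m α p) with hR | hR
  · have hzero : (H.filter fun i => p i ≤ (bhRank m α p : ℝ) / m * α).card = 0 := by omega
    rw [hzero, Nat.cast_zero, zero_mul, zero_mul]
  · rw [max_eq_left (by exact_mod_cast hR)]

lemma bhCount_update_zero (hα : 0 ≤ α) {i : Fin m} {r s : ℕ} (hi : p i ≤ (r : ℝ) / m * α)
    (hrs : r ≤ s) : bhCount m α (Function.update p i 0) s = bhCount m α p s := by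
  unfold bhCount
  congr 1
  ext j
  rcases eq_or_ne j i with rfl | hj
  · simp only [Set.mem_ofPred_eq, Function.update_self]
    exact iff_of_true (by positivity) (hi.trans (by gcongr))
  · simp [Function.update_of_ne hj]

lemma bhRank_update_zero_eq_iff (hα : 0 ≤ α) {i : Fin m} {r : ℕ}
    (hi : p i ≤ (r : ℝ) / m * α) :
    bhRank m α (Function.update p i 0) = r ↔ bhRank m α p = r := by
  have transfer : ∀ {q q' : Fin m → ℝ}, (∀ s, r ≤ s → bhCount m α q s = bhCount m α q' s) →
      bhRank m α q = r → bhRank m α q' = r := by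
    intro q q' hqq' h
    rw [bhRank_eq_iff] at h ⊢
    obtain ⟨⟨hrm, hrc⟩, hmax⟩ := h
    refine ⟨⟨hrm, hqq' r le_rfl ▸ hrc⟩, fun s ⟨hsm, hsc⟩ => ?_⟩
    by_contra! hrs
    exact hrs.not_ge (hmax ⟨hsm, (hqq' s hrs.le).symm ▸ hsc⟩)
  have hcount := fun s hrs => bhCount_update_zero (s := s) hα hi hrs
  exact ⟨fun h => transfer hcount h, transfer fun s hrs => (hcount s hrs).symm⟩

lemma ite_le_bhRank_eq_update_zero (hα : 0 ≤ α) (i : Fin m) :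
    (if p i ≤ (bhRank m α p : ℝ) / m * α then ((bhRank m α p : ℝ))⁻¹ else 0) =
      if p i ≤ (bhRank m α (Function.update p i 0) : ℝ) / m * α then
        ((bhRank m α (Function.update p i 0) : ℝ))⁻¹ else 0 := by
  by_cases h : p i ≤ (bhRank m α p : ℝ) / m * α ∨
      p i ≤ (bhRank m α (Function.update p i 0) : ℝ) / m * α
  · rw [h.elim (fun h => (bhRank_update_zero_eq_iff hα h).2 rfl)
      (fun h => ((bhRank_update_zero_eq_iff hα h).1 rfl).symm)]
  · push Not at h
    rw [if_neg h.1.not_ge, if_neg h.2.not_ge]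

lemma measurable_bhCount (r : ℕ) : Measurable fun p : Fin m → ℝ => bhCount m α p r :=
  (measurable_of_countable fun b : Fin m → Prop => Set.ncard {i | b i}).comp <|
    measurable_pi_lambda _ fun i =>
      measurableSet_setOfPred.1 (measurableSet_le (measurable_pi_apply i) measurable_const)

lemma measurable_bhRank : Measurable (bhRank m α) := by
  refine measurable_to_countable' fun r => ?_
  have hset : bhRank m α ⁻¹' {r} = {p | IsGreatest {s | s ≤ m ∧ s ≤ bhCount m α p s} r} :=
    Set.ext fun p => bhRank_eq_iff
  have hle : ∀ s : ℕ, Measurable fun p : Fin m → ℝ => s ≤ bhCount m α p s := fun s =>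
    measurableSet_setOfPred.1 (measurable_bhCount s measurableSet_Ici)
  rw [hset]
  exact measurableSet_setOfPred.2 ((measurable_const.and (hle r)).and
    (Measurable.forall fun s => (measurable_const.and (hle s)).imp measurable_const))

end BHCombinatorics

section Probability

variable {Ω : Type*} [MeasurableSpace Ω] {μ : Measure Ω}

lemma iIndepFun.indepFun_update {ι β : Type*} [Fintype ι] [DecidableEq ι] [MeasurableSpace β]
    {f : ι → Ω → β} (hf : ∀ i, Measurable (f i)) (h : iIndepFun f μ) (i : ι) (b : β) :
    IndepFun (f i) (fun ω => Function.update (fun j => f j ω) i b) μ := by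
  set T := Finset.univ.erase i
  have hiT := h.indepFun_finset {i} T (by simp [T]) hf
  let F : (T → β) → ι → β := fun q j => if hj : j ∈ T then q ⟨j, hj⟩ else b
  have hF : Measurable F := measurable_pi_lambda _ fun j => by
    by_cases hj : j ∈ T
    · simpa [F, hj] using measurable_pi_apply (⟨j, hj⟩ : T)
    · simp [F, hj]
  convert hiT.comp (measurable_pi_apply ⟨i, Finset.mem_singleton_self i⟩) hF using 1
  · rfl
  funext ω j
  rcases eq_or_ne j i with rfl | hj
  · simp [F, T]
  · simp [F, T, hj]

lemma integrable_ite_le_mul_inv [IsFiniteMeasure μ] {X : Ω → ℝ} {N : Ω → ℕ} (hX : Measurable X)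
    (hN : Measurable N) (c : ℝ) :
    Integrable (fun ω => if X ω ≤ c * N ω then (N ω : ℝ)⁻¹ else 0) μ := by
  refine Integrable.of_bound (Measurable.ite (measurableSet_le hX (by fun_prop)) (by fun_prop)
    measurable_const).aestronglyMeasurable 1 (Filter.Eventually.of_forall fun ω => ?_)
  split_ifs <;> simp [Nat.cast_inv_le_one]

lemma integral_ite_le_mul_inv_le [IsProbabilityMeasure μ] {X : Ω → ℝ} {N : Ω → ℕ}
    (hX : Measurable X) (hN : Measurable N) (hXN : IndepFun X N μ) {c : ℝ} (hc : 0 ≤ c)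
    {M : ℕ} (hNM : ∀ ω, N ω ≤ M) (hcM : c * M ≤ 1)
    (hXunif : ∀ t ∈ Set.Icc (0 : ℝ) 1, μ {ω | X ω ≤ t} ≤ ENNReal.ofReal t) :
    ∫ ω, (if X ω ≤ c * N ω then (N ω : ℝ)⁻¹ else 0) ∂μ ≤ c := by
  set A : ℕ → Set Ω := fun k => {ω | X ω ≤ c * k} ∩ N ⁻¹' {k}
  have hA : ∀ k, MeasurableSet (A k) := fun k =>
    (measurableSet_le hX measurable_const).inter (hN (measurableSet_singleton k))
  have hdecomp : (fun ω => if X ω ≤ c * N ω then (N ω : ℝ)⁻¹ else 0) =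
      fun ω => ∑ k ∈ Finset.range (M + 1), (A k).indicator (fun _ => (k : ℝ)⁻¹) ω := by
    classical
    funext ω
    rw [Finset.sum_eq_single_of_mem (N ω) (Finset.mem_range.2 (Nat.lt_succ_of_le (hNM ω)))]
    · simp [A, Set.indicator_apply]
    · intro k _ hk
      simp [A, Ne.symm hk]
  have hterm : ∀ k ≤ M, μ.real (A k) * (k : ℝ)⁻¹ ≤ c * μ.real (N ⁻¹' {k}) := by
    intro k hk
    rcases Nat.eq_zero_or_pos k with rfl | hk0
    · simp only [Nat.cast_zero, inv_zero, mul_zero]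
      positivity
    have hck : c * k ∈ Set.Icc (0 : ℝ) 1 :=
      ⟨by positivity, le_trans (by gcongr) hcM⟩
    have hprod : μ.real (A k) = μ.real {ω | X ω ≤ c * k} * μ.real (N ⁻¹' {k}) := by
      simp only [measureReal_def, A, ← ENNReal.toReal_mul]
      exact congrArg ENNReal.toReal (hXN.measure_inter_preimage_eq_mul _ _
        measurableSet_Iic (measurableSet_singleton k))
    have hXk : μ.real {ω | X ω ≤ c * k} ≤ c * k :=
      ENNReal.toReal_le_of_le_ofReal hck.1 (hXunif _ hck)
    calc μ.real (A k) * (k : ℝ)⁻¹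
        ≤ c * k * μ.real (N ⁻¹' {k}) * (k : ℝ)⁻¹ := by rw [hprod]; gcongr
      _ = c * μ.real (N ⁻¹' {k}) := by field_simp
  rw [hdecomp, integral_finsetSum _ fun k _ => (integrable_const _).indicator (hA k)]
  simp_rw [integral_indicator_const _ (hA _), smul_eq_mul]
  calc ∑ k ∈ Finset.range (M + 1), μ.real (A k) * (k : ℝ)⁻¹
      ≤ ∑ k ∈ Finset.range (M + 1), c * μ.real (N ⁻¹' {k}) :=
        Finset.sum_le_sum fun k hk => hterm k (Nat.lt_succ_iff.1 (Finset.mem_range.1 hk))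
    _ = c * μ.real (N ⁻¹' ↑(Finset.range (M + 1))) := by
        rw [← Finset.mul_sum, sum_measureReal_preimage_singleton _
          fun k _ => hN (measurableSet_singleton k)]
    _ ≤ c := mul_le_of_le_one_right hc measureReal_le_one

end Probability

theorem stmt_9_general (m : ℕ) (α : ℝ) (hα : α ∈ Set.Ioo (0 : ℝ) 1)
    {Ω : Type*} [MeasureSpace Ω] [IsProbabilityMeasure (ℙ : Measure Ω)]
    (P : Fin m → Ω → ℝ) (hmeas : ∀ i, Measurable (P i))
    (hindep : iIndepFun P ℙ)
    (H0 : Set (Fin m))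
    (hnull : ∀ i ∈ H0, ∀ t ∈ Set.Icc (0 : ℝ) 1, ℙ {ω | P i ω ≤ t} ≤ ENNReal.ofReal t) :
    ∫ ω, fdp m H0 (bhReject m α fun i => P i ω) ≤ (Set.ncard H0 : ℝ) / m * α := by
  obtain ⟨hα0, hα1⟩ := hα
  obtain ⟨H, rfl⟩ := H0.toFinite.exists_finset_coe
  set R : Fin m → Ω → ℕ := fun i ω => bhRank m α (Function.update (fun j => P j ω) i 0)
  have hR : ∀ i, Measurable (R i) := fun i => measurable_bhRank.comp <|
    measurable_update'.comp ((measurable_pi_lambda _ hmeas).prodMk measurable_const)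
  have hfdp : ∀ ω, fdp m H (bhReject m α fun i => P i ω) =
      ∑ i ∈ H, if P i ω ≤ α / m * R i ω then (R i ω : ℝ)⁻¹ else 0 := fun ω => by
    rw [fdp_bhReject_eq_sum hα0.le]
    exact Finset.sum_congr rfl fun i _ =>
      (ite_le_bhRank_eq_update_zero (p := fun j => P j ω) hα0.le i).trans (by rw [div_mul_comm])
  have hαm : α / m * m ≤ 1 := by
    rcases eq_or_ne (m : ℝ) 0 with h | h
    · simp [h]
    · rw [div_mul_cancel₀ _ h]
      exact hα1.le
  simp_rw [hfdp]
  rw [integral_finsetSum _ fun i _ => integrable_ite_le_mul_inv (hmeas i) (hR i) _]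
  calc ∑ i ∈ H, ∫ ω, (if P i ω ≤ α / m * R i ω then (R i ω : ℝ)⁻¹ else 0)
      ≤ ∑ _i ∈ H, α / m := Finset.sum_le_sum fun i hi =>
        integral_ite_le_mul_inv_le (hmeas i) (hR i)
          ((iIndepFun.indepFun_update hmeas hindep i 0).comp measurable_id measurable_bhRank)
          (by positivity) (fun _ => bhRank_le) hαm (hnull i hi)
    _ = (Set.ncard (H : Set (Fin m)) : ℝ) / m * α := by
        rw [Finset.sum_const, nsmul_eq_mul, Set.ncard_coe_finset]
        ring

/-- BH FDR control: with independent p-values whose null members are super-uniform,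
the BH procedure at level `α` has `FDR ≤ π₀·α` where `π₀ = |H0|/m`. -/
theorem stmt_9 (m : ℕ) (hm : 1 ≤ m) (α : ℝ) (hα : α ∈ Set.Ioo (0 : ℝ) 1)
    {Ω : Type*} [MeasureSpace Ω] [IsProbabilityMeasure (ℙ : Measure Ω)]
    (P : Fin m → Ω → ℝ) (hmeas : ∀ i, Measurable (P i))
    (hindep : iIndepFun P ℙ)
    (H0 : Set (Fin m))
    (hnull : ∀ i ∈ H0, ∀ t ∈ Set.Icc (0 : ℝ) 1, ℙ {ω | P i ω ≤ t} ≤ ENNReal.ofReal t) :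
    ∫ ω, fdp m H0 (bhReject m α fun i => P i ω) ≤ (Set.ncard H0 : ℝ) / m * α :=
  stmt_9_general m α hα P hmeas hindep H0 hnull
end

section
/- Let F_n denote the CDF of P^{fMC} = (1 + Binomial(n, p))/(n+1) where p ~ F for a fixed continuous CDF F on [0,1]. Then F_n converges uniformly on [0,1] to F as n → ∞. -/
/-!
Given `p`, the Monte Carlo p-value `(1 + B) / (n + 1)` with `B ~ Bin(n, p)` lies within `1 / n`
of `B / n`, so Chebyshev's inequality (in the form of the variance identity for Bernstein
polynomials) makes it `ε`-far from `p` with probability at most `4 / (ε² n)`. Integrating over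
`p ~ μ` sandwiches its CDF: `F (t - ε) - 4 / (ε² n) ≤ Fₙ t ≤ F (t + ε) + 4 / (ε² n)`, and
uniform continuity of `F` near `[0, 1]` turns the sandwich into uniform convergence.
-/

open MeasureTheory Filter Set
open scoped NNReal ENNReal unitInterval

theorem bernstein_sum_far_le {n : ℕ} (hn : n ≠ 0) (x : I) {c : ℝ} (hc : 0 < c) :
    ∑ k ∈ Finset.univ.filter (fun k : Fin (n + 1) => c ≤ |(x : ℝ) - (k : ℕ) / n|),
      bernstein n k x ≤ 1 / (c ^ 2 * n) := by
  calc _ ≤ ∑ k ∈ Finset.univ.filter (fun k : Fin (n + 1) => c ≤ |(x : ℝ) - (k : ℕ) / n|),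
        ((x : ℝ) - bernstein.z k) ^ 2 / c ^ 2 * bernstein n k x := by
        gcongr with k hk
        refine le_mul_of_one_le_left bernstein_nonneg ?_
        rw [one_le_div₀ (by positivity)]
        exact (pow_le_pow_left₀ hc.le (Finset.mem_filter.1 hk).2 2).trans_eq (sq_abs _)
    _ ≤ ∑ k : Fin (n + 1), ((x : ℝ) - bernstein.z k) ^ 2 / c ^ 2 * bernstein n k x :=
        Finset.sum_le_sum_of_subset_of_nonneg (Finset.filter_subset _ _)
          fun _ _ _ => by positivity
    _ = (x : ℝ) * (1 - x) / n / c ^ 2 := by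
        rw [← bernstein.variance hn, Finset.sum_div]
        congr! 1 with k
        ring
    _ ≤ 1 / (c ^ 2 * n) := by
        have hx : (x : ℝ) * (1 - x) ≤ 1 := by nlinarith [x.2.1, x.2.2]
        rw [div_div, mul_comm (n : ℝ)]
        gcongr

theorem PMF.binomial_apply_eq_ofReal_bernstein (q : ℝ≥0) (hq : q ≤ 1) (n : ℕ)
    (k : Fin (n + 1)) :
    PMF.binomial q hq n k = ENNReal.ofReal (bernstein n k ⟨q, q.2, hq⟩) := by
  have h : bernstein n k ⟨q, q.2, hq⟩
      = ((q ^ (k : ℕ) * (1 - q) ^ (n - k) * n.choose k : ℝ≥0) : ℝ) := by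
    rw [bernstein_apply]
    push_cast [NNReal.coe_sub hq]
    ring
  rw [h, ENNReal.ofReal_coe_nnreal, PMF.binomial_apply, Fin.val_last]
  push_cast [ENNReal.coe_sub]
  rfl

theorem PMF.binomial_toMeasure_far_le (q : ℝ≥0) (hq : q ≤ 1) {n : ℕ} (hn : n ≠ 0) {c : ℝ}
    (hc : 0 < c) :
    (PMF.binomial q hq n).toMeasure {k | c ≤ |(q : ℝ) - (k : ℕ) / n|}
      ≤ ENNReal.ofReal (1 / (c ^ 2 * n)) := by
  have hset : {k : Fin (n + 1) | c ≤ |(q : ℝ) - (k : ℕ) / n|}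
      = ↑(Finset.univ.filter fun k : Fin (n + 1) => c ≤ |(q : ℝ) - (k : ℕ) / n|) := by
    simp
  rw [hset, PMF.toMeasure_apply_finset]
  simp_rw [PMF.binomial_apply_eq_ofReal_bernstein]
  rw [← ENNReal.ofReal_sum_of_nonneg fun _ _ => bernstein_nonneg]
  exact ENNReal.ofReal_le_ofReal (bernstein_sum_far_le hn ⟨q, q.2, hq⟩ hc)

theorem abs_one_add_div_add_one_sub_div_le {n k : ℕ} (hn : n ≠ 0) (hk : k ≤ n) :
    |(1 + k : ℝ) / (n + 1) - k / n| ≤ 1 / n := by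
  have hn' : (0 : ℝ) < n := by positivity
  have hk' : (k : ℝ) ≤ n := by exact_mod_cast hk
  rw [div_sub_div _ _ (by positivity) hn'.ne', abs_le]
  constructor
  · exact (neg_nonpos.2 (by positivity)).trans (div_nonneg (by nlinarith) (by positivity))
  · rw [div_le_div_iff₀ (by positivity) hn']
    nlinarith

noncomputable def monteCarloPValueLaw (n : ℕ) (p : ℝ) : Measure ℝ :=
  (PMF.binomial (min (Real.toNNReal p) 1) (min_le_right _ _) n).toMeasure.map
    fun k : Fin (n + 1) => (1 + ((k : ℕ) : ℝ)) / ((n : ℝ) + 1)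

instance isProbabilityMeasure_monteCarloPValueLaw (n : ℕ) (p : ℝ) :
    IsProbabilityMeasure (monteCarloPValueLaw n p) :=
  Measure.isProbabilityMeasure_map (measurable_of_countable _).aemeasurable

theorem measurable_monteCarloPValueLaw (n : ℕ) : Measurable (monteCarloPValueLaw n) := by
  classical
  refine Measure.measurable_of_measurable_coe _ fun s hs => ?_
  simp_rw [monteCarloPValueLaw, Measure.map_apply (measurable_of_countable _) hs,
    PMF.toMeasure_apply_fintype, Set.indicator_apply, PMF.binomial_apply]
  refine Finset.measurable_sum _ fun k _ => Measurable.ite (MeasurableSet.const _) ?_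
    measurable_const
  exact Measurable.coe_nnreal_ennreal (by fun_prop)

theorem monteCarloPValueLaw_far_le {p : ℝ} (hp : p ∈ Icc 0 1) {ε : ℝ} (hε : 0 < ε) {n : ℕ}
    (hn : 2 / ε ≤ n) :
    monteCarloPValueLaw n p {x | ε ≤ |x - p|} ≤ ENNReal.ofReal (4 / ε ^ 2 / n) := by
  have hn0 : n ≠ 0 := by
    have : (0 : ℝ) < n := (by positivity : (0 : ℝ) < 2 / ε).trans_le hn
    exact_mod_cast this.ne'
  have hq : min (Real.toNNReal p) 1 = Real.toNNReal p := min_eq_left (by simpa using hp.2)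
  have hmeas : MeasurableSet {x : ℝ | ε ≤ |x - p|} :=
    measurableSet_le measurable_const (by fun_prop)
  rw [monteCarloPValueLaw, Measure.map_apply (measurable_of_countable _) hmeas]
  calc _ ≤ (PMF.binomial (min (Real.toNNReal p) 1) (min_le_right _ _) n).toMeasure
          {k | ε / 2 ≤ |((min (Real.toNNReal p) 1 : ℝ≥0) : ℝ) - (k : ℕ) / n|} := by
        refine measure_mono fun k hk => ?_
        have hclose := abs_one_add_div_add_one_sub_div_le hn0 (Nat.lt_succ_iff.1 k.2)
        have hinv : 1 / (n : ℝ) ≤ ε / 2 := by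
          rw [div_le_iff₀ (by positivity)] at hn ⊢
          linarith
        simp only [Set.mem_setOf_eq, Set.mem_preimage] at hk ⊢
        rw [hq, Real.coe_toNNReal _ hp.1]
        calc ε / 2 ≤ ε - 1 / n := by linarith
          _ ≤ _ := by linarith [abs_sub_le ((1 + (k : ℕ) : ℝ) / (n + 1)) ((k : ℕ) / n) p,
                abs_sub_comm p ((k : ℕ) / (n : ℝ))]
    _ ≤ ENNReal.ofReal (4 / ε ^ 2 / n) := by
        refine (PMF.binomial_toMeasure_far_le _ _ hn0 (half_pos hε)).trans_eq ?_
        congr 1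
        field_simp
        ring

section KernelSandwich

variable {μ : Measure ℝ} [IsProbabilityMeasure μ] {κ : ℝ → Measure ℝ}
  [∀ p, IsProbabilityMeasure (κ p)] {ε : ℝ} {d : ℝ≥0∞}

theorem bind_Iic_le_of_ae_far_le (hκ : AEMeasurable κ μ)
    (hfar : ∀ᵐ p ∂μ, κ p {x | ε ≤ |x - p|} ≤ d) (t : ℝ) :
    μ.bind κ (Iic t) ≤ μ (Iic (t + ε)) + d := by
  rw [Measure.bind_apply measurableSet_Iic hκ]
  calc ∫⁻ p, κ p (Iic t) ∂μ ≤ ∫⁻ p, (Iic (t + ε)).indicator 1 p + d ∂μ := by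
        refine lintegral_mono_ae (hfar.mono fun p hp => ?_)
        by_cases hpt : p ≤ t + ε
        · simpa [Set.indicator_of_mem (Set.mem_Iic.2 hpt)] using le_add_right prob_le_one
        · refine (measure_mono fun x (hx : x ≤ t) => ?_).trans (hp.trans le_add_self)
          rw [Set.mem_setOf_eq, abs_sub_comm]
          exact le_abs.2 (Or.inl (by linarith [not_le.1 hpt]))
    _ = μ (Iic (t + ε)) + d := by
        rw [lintegral_add_right _ measurable_const, lintegral_indicator_one measurableSet_Iic,
          lintegral_const, measure_univ, mul_one]

theorem Iic_le_bind_of_ae_far_le (hκ : AEMeasurable κ μ)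
    (hfar : ∀ᵐ p ∂μ, κ p {x | ε ≤ |x - p|} ≤ d) (t : ℝ) :
    μ (Iic (t - ε)) ≤ μ.bind κ (Iic t) + d := by
  rw [Measure.bind_apply measurableSet_Iic hκ]
  calc μ (Iic (t - ε)) = ∫⁻ p, (Iic (t - ε)).indicator 1 p ∂μ :=
        (lintegral_indicator_one measurableSet_Iic).symm
    _ ≤ ∫⁻ p, κ p (Iic t) + d ∂μ := by
        refine lintegral_mono_ae (hfar.mono fun p hp => ?_)
        by_cases hpt : p ≤ t - ε
        · rw [Set.indicator_of_mem (Set.mem_Iic.2 hpt), Pi.one_apply,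
            ← prob_add_prob_compl (μ := κ p) (measurableSet_Iic (a := t))]
          gcongr
          refine (measure_mono fun x hx => ?_).trans hp
          have hxt : t < x := not_le.1 hx
          show ε ≤ |x - p|
          exact le_abs.2 (Or.inl (by linarith))
        · simp [Set.indicator_of_notMem (show p ∉ Iic (t - ε) from hpt)]
    _ = ∫⁻ p, κ p (Iic t) ∂μ + d := by
        rw [lintegral_add_right _ measurable_const, lintegral_const, measure_univ, mul_one]

theorem toReal_bind_Iic_mem_Icc_of_ae_far_le (hκ : AEMeasurable κ μ) {d : ℝ} (hd : 0 ≤ d)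
    (hfar : ∀ᵐ p ∂μ, κ p {x | ε ≤ |x - p|} ≤ ENNReal.ofReal d) (t : ℝ) :
    (μ.bind κ (Iic t)).toReal
      ∈ Icc ((μ (Iic (t - ε))).toReal - d) ((μ (Iic (t + ε))).toReal + d) := by
  have := isProbabilityMeasure_bind hκ (ae_of_all μ fun _ => inferInstance)
  constructor
  · have h := ENNReal.toReal_mono (by finiteness) (Iic_le_bind_of_ae_far_le hκ hfar t)
    rw [ENNReal.toReal_add (by finiteness) ENNReal.ofReal_ne_top, ENNReal.toReal_ofReal hd] at h
    linarith
  · have h := ENNReal.toReal_mono (by finiteness) (bind_Iic_le_of_ae_far_le hκ hfar t)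
    rwa [ENNReal.toReal_add (by finiteness) ENNReal.ofReal_ne_top, ENNReal.toReal_ofReal hd] at h

end KernelSandwich

theorem tendstoUniformlyOn_of_shifted_sandwich {ι : Type*} {l : Filter ι} {F : ℝ → ℝ}
    {G : ι → ℝ → ℝ} {s : Set ℝ} (hs : IsCompact s) (hF : ∀ t ∈ s, ContinuousAt F t)
    (h : ∀ ε > 0, ∀ᶠ i in l, ∀ t ∈ s, G i t ∈ Icc (F (t - ε) - ε) (F (t + ε) + ε)) :
    TendstoUniformlyOn G F l s := by
  rw [Metric.tendstoUniformlyOn_iff]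
  intro c hc
  obtain ⟨δ, hδ, hFδ⟩ := Metric.mem_uniformity_dist.1
    (hs.uniformContinuousAt_of_continuousAt F hF (Metric.dist_mem_uniformity (half_pos hc)))
  set ε := min (δ / 2) (c / 2)
  have hε0 : 0 < ε := by positivity
  have hεδ : ε < δ := (min_le_left _ _).trans_lt (half_lt_self hδ)
  have hεc : ε ≤ c / 2 := min_le_right _ _
  filter_upwards [h ε hε0] with i hi t ht
  have hup : |F t - F (t + ε)| < c / 2 :=
    hFδ (a := t) (b := t + ε) (by simpa [Real.dist_eq, abs_of_pos hε0]) ht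
  have hdown : |F t - F (t - ε)| < c / 2 :=
    hFδ (a := t) (b := t - ε) (by simpa [Real.dist_eq, abs_of_pos hε0]) ht
  obtain ⟨hlo, hhi⟩ := hi t ht
  rw [abs_lt] at hup hdown
  rw [Real.dist_eq, abs_lt]
  constructor <;> linarith

/-- The CDF of the Monte Carlo p-value `P^{fMC} = (1 + Binomial(n, p))/(n+1)`,
where `p ~ F` for a continuous CDF `F` (of a probability measure `μ` on `[0,1]`),
converges uniformly on `[0,1]` to `F` as `n → ∞`. -/
theorem stmt_13 (μ : Measure ℝ) [IsProbabilityMeasure μ]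
    (hsupp : μ (Set.Icc 0 1) = 1)
    (F : ℝ → ℝ) (hF : ∀ t, F t = (μ (Set.Iic t)).toReal) (hFcont : Continuous F) :
    TendstoUniformlyOn
      (fun (n : ℕ) (t : ℝ) =>
        ((μ.bind fun p =>
            ((PMF.binomial (min (Real.toNNReal p) 1) (min_le_right _ _) n).toMeasure.map
              fun k : Fin (n + 1) => (1 + ((k : ℕ) : ℝ)) / ((n : ℝ) + 1)))
          (Set.Iic t)).toReal)
      F Filter.atTop (Set.Icc 0 1) := by
  change TendstoUniformlyOn (fun n t => (μ.bind (monteCarloPValueLaw n) (Iic t)).toReal) F _ _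
  obtain rfl : F = fun t => (μ (Iic t)).toReal := funext hF
  have hae : ∀ᵐ p ∂μ, p ∈ Icc (0 : ℝ) 1 :=
    mem_ae_iff.2 ((prob_compl_eq_zero_iff measurableSet_Icc).2 hsupp)
  refine tendstoUniformlyOn_of_shifted_sandwich isCompact_Icc
    (fun t _ => hFcont.continuousAt) fun ε hε => ?_
  filter_upwards [tendsto_natCast_atTop_atTop.eventually_ge_atTop (2 / ε),
    (tendsto_const_div_atTop_nhds_zero_nat (4 / ε ^ 2)).eventually (ge_mem_nhds hε)]
    with n hn hsmall t _
  have hfar : ∀ᵐ p ∂μ, monteCarloPValueLaw n p {x | ε ≤ |x - p|}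
      ≤ ENNReal.ofReal (4 / ε ^ 2 / n) :=
    hae.mono fun p hp => monteCarloPValueLaw_far_le hp hε hn
  obtain ⟨hlo, hhi⟩ := toReal_bind_Iic_mem_Icc_of_ae_far_le
    (measurable_monteCarloPValueLaw n).aemeasurable (by positivity) hfar t
  exact ⟨by linarith, by linarith⟩
end

section
/- Let f: [0,1] → ℝ≥0 be a continuous, monotonically decreasing probability density with f(τ) < 1/α at τ ∈ (0,1). Then ∫₀^{τ − 1/√n} f(p)/(p − τ)² dp + ∫_{τ − 1/√n}^{τ + 1/√n} n·f(p) dp + ∫_{τ + 1/√n}^1 f(p)/(p − τ)² dp = O(√n · log n) as n → ∞ (in fact O(√n) up to logarithmic factors in n). -/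
open MeasureTheory Filter Set

/-! With `ε = 1/√n` and `M` a bound for `|f|` on the compact interval `[0,1]`, each tail is at
most `M ∫_{|p-τ|≥ε} (p-τ)⁻² dp ≤ M/ε = M√n` and the middle integral is at most
`n · M · 2ε = 2M√n`. So the sum is `O(√n)`, and `log n ≥ 1` for large `n`. -/

lemma integral_inv_sub_sq {a b τ : ℝ} (hτ : τ ∉ uIcc a b) :
    ∫ p in a..b, ((p - τ) ^ 2)⁻¹ = (a - τ)⁻¹ - (b - τ)⁻¹ := by
  have h0 : (0 : ℝ) ∉ uIcc (a - τ) (b - τ) := by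
    simpa [mem_uIcc, sub_nonneg, sub_nonpos] using hτ
  rw [intervalIntegral.integral_comp_sub_right (fun x => (x ^ 2)⁻¹) τ]
  simp_rw [← zpow_natCast, ← zpow_neg]
  rw [integral_zpow (Or.inr ⟨by norm_num, h0⟩)]
  norm_num
  ring

lemma integral_div_sub_sq_le {f : ℝ → ℝ} {a b τ M : ℝ} (hab : a ≤ b) (hτ : τ ∉ Icc a b)
    (hf : ContinuousOn f (Icc a b)) (hfM : ∀ p ∈ Icc a b, f p ≤ M) :
    ∫ p in a..b, f p / (p - τ) ^ 2 ≤ M * ((a - τ)⁻¹ - (b - τ)⁻¹) := by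
  have hne : ∀ p ∈ Icc a b, (p - τ) ^ 2 ≠ 0 := fun p hp =>
    pow_ne_zero 2 (sub_ne_zero.2 fun h => hτ (h ▸ hp))
  rw [← integral_inv_sub_sq (by rwa [uIcc_of_le hab]), ← intervalIntegral.integral_const_mul]
  refine intervalIntegral.integral_mono_on hab ?_ ?_ fun p hp => ?_
  · exact (hf.div (by fun_prop) hne).intervalIntegrable_of_Icc hab
  · have hsq : ContinuousOn (fun p => (p - τ) ^ 2) (Icc a b) := by fun_prop
    exact (continuousOn_const.mul (hsq.inv₀ hne)).intervalIntegrable_of_Icc hab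
  · rw [div_eq_mul_inv]
    exact mul_le_mul_of_nonneg_right (hfM p hp) (by positivity)

lemma integral_div_sub_sq_le_of_le_sub {f : ℝ → ℝ} {a τ ε M : ℝ} (hε : 0 < ε) (ha : a ≤ τ - ε)
    (hf : ContinuousOn f (Icc a (τ - ε))) (hfM : ∀ p ∈ Icc a (τ - ε), f p ≤ M) (hM : 0 ≤ M) :
    ∫ p in a..τ - ε, f p / (p - τ) ^ 2 ≤ M / ε := by
  refine (integral_div_sub_sq_le ha (fun h => by linarith [h.2]) hf hfM).trans ?_
  have : 0 < τ - a := by linarith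
  rw [show τ - ε - τ = -ε by ring, show a - τ = -(τ - a) by ring, inv_neg, inv_neg, div_eq_mul_inv]
  nlinarith [inv_pos.2 this]

lemma integral_div_sub_sq_le_of_add_le {f : ℝ → ℝ} {b τ ε M : ℝ} (hε : 0 < ε) (hb : τ + ε ≤ b)
    (hf : ContinuousOn f (Icc (τ + ε) b)) (hfM : ∀ p ∈ Icc (τ + ε) b, f p ≤ M) (hM : 0 ≤ M) :
    ∫ p in τ + ε..b, f p / (p - τ) ^ 2 ≤ M / ε := by
  refine (integral_div_sub_sq_le hb (fun h => by linarith [h.1]) hf hfM).trans ?_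
  have : 0 < b - τ := by linarith
  rw [show τ + ε - τ = ε by ring, div_eq_mul_inv]
  nlinarith [inv_pos.2 this]

lemma integral_const_mul_le_of_abs_le {f : ℝ → ℝ} {a b c M : ℝ} (hab : a ≤ b) (hc : 0 ≤ c)
    (hfM : ∀ p ∈ Icc a b, |f p| ≤ M) :
    ∫ p in a..b, c * f p ≤ c * M * (b - a) := by
  have hbound : ∀ p ∈ uIoc a b, ‖c * f p‖ ≤ c * M := fun p hp => by
    rw [uIoc_of_le hab] at hp
    rw [norm_mul, Real.norm_of_nonneg hc, Real.norm_eq_abs]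
    exact mul_le_mul_of_nonneg_left (hfM p (Ioc_subset_Icc_self hp)) hc
  calc _ ≤ ‖∫ p in a..b, c * f p‖ := Real.le_norm_self _
    _ ≤ c * M * |b - a| := intervalIntegral.norm_integral_le_of_norm_le_const hbound
    _ = c * M * (b - a) := by rw [abs_of_nonneg (sub_nonneg.2 hab)]

lemma eventually_one_div_sqrt_mem_Ioo {δ : ℝ} (hδ : 0 < δ) :
    ∀ᶠ n : ℕ in atTop, 1 / Real.sqrt n ∈ Ioo 0 δ := by
  have hlim : Tendsto (fun n : ℕ => (Real.sqrt n)⁻¹) atTop (nhds 0) :=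
    (Real.tendsto_sqrt_atTop.comp tendsto_natCast_atTop_atTop).inv_tendsto_atTop
  filter_upwards [hlim.eventually (gt_mem_nhds hδ), eventually_gt_atTop 0] with n hn hn0
  rw [one_div]
  exact ⟨by positivity, hn⟩

lemma eventually_one_le_log_natCast : ∀ᶠ n : ℕ in atTop, 1 ≤ Real.log n :=
  (Real.tendsto_log_atTop.comp tendsto_natCast_atTop_atTop).eventually_ge_atTop 1

theorem stmt_15_general (f : ℝ → ℝ) (τ : ℝ)
    (hf_cont : ContinuousOn f (Set.Icc 0 1))
    (hτ : τ ∈ Set.Ioo (0 : ℝ) 1) :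
    ∃ C > (0 : ℝ), ∀ᶠ n : ℕ in Filter.atTop,
      (∫ p in (0 : ℝ)..(τ - 1 / Real.sqrt n), f p / (p - τ) ^ 2) +
        (∫ p in (τ - 1 / Real.sqrt n)..(τ + 1 / Real.sqrt n), (n : ℝ) * f p) +
        (∫ p in (τ + 1 / Real.sqrt n)..(1 : ℝ), f p / (p - τ) ^ 2)
      ≤ C * Real.sqrt n * Real.log n := by
  obtain ⟨hτ0, hτ1⟩ := hτ
  obtain ⟨M, hM⟩ := isCompact_Icc.exists_bound_of_continuousOn hf_cont
  have hM0 : 0 ≤ M := (norm_nonneg _).trans (hM 0 ⟨le_rfl, zero_le_one⟩)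
  have hfM : ∀ p ∈ Icc (0 : ℝ) 1, f p ≤ M := fun p hp => (le_abs_self _).trans (hM p hp)
  refine ⟨4 * M + 1, by positivity, ?_⟩
  filter_upwards [eventually_one_div_sqrt_mem_Ioo (lt_min hτ0 (sub_pos.2 hτ1)),
    eventually_one_le_log_natCast] with n ⟨hε0, hεδ⟩ hlog
  set ε := 1 / Real.sqrt n with hε
  have hετ : ε < τ := hεδ.trans_le (min_le_left _ _)
  have hε1 : ε < 1 - τ := hεδ.trans_le (min_le_right _ _)
  have hleft := integral_div_sub_sq_le_of_le_sub (a := 0) (τ := τ) hε0 (by linarith)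
    (hf_cont.mono (Icc_subset_Icc le_rfl (by linarith)))
    (fun p hp => hfM p ⟨hp.1, by linarith [hp.2]⟩) hM0
  have hright := integral_div_sub_sq_le_of_add_le (τ := τ) (b := 1) hε0 (by linarith)
    (hf_cont.mono (Icc_subset_Icc (by linarith) le_rfl))
    (fun p hp => hfM p ⟨by linarith [hp.1], hp.2⟩) hM0
  have hmid := integral_const_mul_le_of_abs_le (f := f) (a := τ - ε) (b := τ + ε)
    (by linarith) n.cast_nonneg (fun p hp => hM p ⟨by linarith [hp.1], by linarith [hp.2]⟩)
  have hnε : (n : ℝ) * ε = Real.sqrt n := by rw [hε, mul_one_div, Real.div_sqrt]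
  have hmid_eq : (n : ℝ) * M * (τ + ε - (τ - ε)) = 2 * M * Real.sqrt n := by
    rw [← hnε]; ring
  have htails : M / ε = M * Real.sqrt n := by
    rw [div_eq_mul_inv, hε, one_div, inv_inv]
  have hsqrt := Real.sqrt_nonneg (n : ℝ)
  calc _ ≤ 4 * M * Real.sqrt n := by linarith
    _ ≤ (4 * M + 1) * Real.sqrt n * 1 := by nlinarith
    _ ≤ (4 * M + 1) * Real.sqrt n * Real.log n := by gcongr

/-- The per-hypothesis expected MC sample complexity integral
`E[min(n, 1/(P-τ)²)]` is `Õ(√n)`, i.e. `O(√n · log n)`. -/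
theorem stmt_15 (f : ℝ → ℝ) (α τ : ℝ) (hα : 0 < α)
    (hf_cont : ContinuousOn f (Set.Icc 0 1))
    (hf_anti : AntitoneOn f (Set.Icc 0 1))
    (hf_nonneg : ∀ p ∈ Set.Icc (0 : ℝ) 1, 0 ≤ f p)
    (hf_density : ∫ p in (0 : ℝ)..1, f p = 1)
    (hτ : τ ∈ Set.Ioo (0 : ℝ) 1) (hfτ : f τ < 1 / α) :
    ∃ C > (0 : ℝ), ∀ᶠ n : ℕ in Filter.atTop,
      (∫ p in (0 : ℝ)..(τ - 1 / Real.sqrt n), f p / (p - τ) ^ 2) +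
        (∫ p in (τ - 1 / Real.sqrt n)..(τ + 1 / Real.sqrt n), (n : ℝ) * f p) +
        (∫ p in (τ + 1 / Real.sqrt n)..(1 : ℝ), f p / (p - τ) ^ 2)
      ≤ C * Real.sqrt n * Real.log n :=
  stmt_15_general f τ hf_cont hτ
end
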